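/- arXiv:1112.3466 — 3 statements merged into one kernel-verified Lean document; each statement's English description precedes it below -/
import Mathlib

section
/- Let f be a map of a metric space fixing q, and suppose every point z with d(f^{nk}(z), q) < ξ for all n ∈ ℤ (for a fixed k ≥ 1) lies in a set E on which f^k = id. If additionally there is a point y with d(q,y) = 3ξ/4 reachable from q by δ-chains inside the ξ-ball for every δ > 0, then f^k does not ε-shadow with ε < ξ/4. -/
/-!
Closing up a δ-chain from `q` through a point `y` with `d(q, y) = 3ξ/4` gives a periodic
δ-pseudo-orbit inside the closed `3ξ/4`-ball. A point ε-shadowing it has its whole orbit within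
`ε + 3ξ/4 < ξ` of `q`, so it lies in `E` and is fixed by `f^k`; being ε-close to both `q` and `y`
it forces `3ξ/4 < 2ε < ξ/2`.
-/

open Fin.CommRing in
theorem exists_pseudoOrbit_of_closed_chain {α : Type*} [Dist α] {g : α → α} {δ : ℝ} {n : ℕ}
    (c : Fin (n + 2) → α) (hclosed : c 0 = c (Fin.last (n + 1)))
    (hstep : ∀ i : Fin (n + 1), dist (g (c i.castSucc)) (c i.succ) < δ) :
    ∃ x : ℤ → α, (∀ i, dist (g (x i)) (x (i + 1)) < δ) ∧ (∀ i, x i ∈ Set.range c) ∧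
      ∀ j : Fin (n + 2), x (j : ℕ) = c j := by
  set d : Fin (n + 1) → α := fun j => c j.castSucc
  have hd_succ : ∀ j : Fin (n + 1), d (j + 1) = c j.succ := by
    intro j
    rcases Fin.eq_castSucc_or_eq_last j with ⟨j, rfl⟩ | rfl
    · simp [d, Fin.coeSucc_eq_succ]
    · simp [d, hclosed]
  refine ⟨fun i => d i, fun i => ?_, fun i => ⟨_, rfl⟩, fun j => ?_⟩
  · simpa only [Int.cast_add, Int.cast_one, hd_succ] using hstep (i : Fin (n + 1))
  · rcases Fin.eq_castSucc_or_eq_last j with ⟨j, rfl⟩ | rfl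
    · simp [d]
    · simp [d, hclosed]

theorem dist_lt_two_mul_of_isFixedPt_of_shadows {α : Type*} [PseudoMetricSpace α]
    {g : Equiv.Perm α} {z : α} {x : ℤ → α} {ε : ℝ} (hfix : Function.IsFixedPt g z)
    (hz : ∀ i : ℤ, dist ((g ^ i) z) (x i) < ε) (i j : ℤ) : dist (x i) (x j) < 2 * ε := by
  have hz' : ∀ i, dist z (x i) < ε := fun i => hfix.perm_zpow i ▸ hz i
  calc dist (x i) (x j) ≤ dist z (x i) + dist z (x j) := dist_triangle_left _ _ _
    _ < 2 * ε := by linarith [hz' i, hz' j]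

theorem iterate_not_shadowing_general {M : Type*} [MetricSpace M]
    (f : Equiv.Perm M) (q : M) (ξ : ℝ)
    (k : ℕ) (E : Set M)
    (hid : ∀ x ∈ E, (f ^ k) x = x)
    (hsub : ∀ z : M, (∀ n : ℤ, dist (((f ^ k) ^ n) z) q < ξ) → z ∈ E)
    (hchain : ∀ δ > (0 : ℝ), ∃ N : ℕ, ∃ c : Fin (N + 1) → M,
      c 0 = q ∧ c (Fin.last N) = q ∧
      (∃ i, dist q (c i) = 3 * ξ / 4) ∧
      (∀ i, c i ∈ Metric.closedBall q (3 * ξ / 4)) ∧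
      (∀ i : Fin N, dist ((f ^ k) (c i.castSucc)) (c i.succ) < δ)) :
    ∀ ε : ℝ, 0 < ε → ε < ξ / 4 →
      ¬ (∃ δ > (0 : ℝ), ∀ x : ℤ → M,
          (∀ i : ℤ, dist ((f ^ k) (x i)) (x (i + 1)) < δ) →
          ∃ z : M, ∀ i : ℤ, dist (((f ^ k) ^ i) z) (x i) < ε) := by
  rintro ε hε hεξ ⟨δ, hδ, hshadow⟩
  obtain ⟨N, c, hc0, hcN, ⟨i₀, hi₀⟩, hball, hstep⟩ := hchain δ hδ
  obtain ⟨n, rfl⟩ : ∃ n, N = n + 1 := by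
    rcases N with _ | n
    · rw [Fin.fin_one_eq_zero i₀, hc0, dist_self] at hi₀
      linarith
    · exact ⟨n, rfl⟩
  obtain ⟨x, hpseudo, hrange, hxc⟩ :=
    exists_pseudoOrbit_of_closed_chain c (hc0.trans hcN.symm) hstep
  obtain ⟨z, hz⟩ := hshadow x hpseudo
  have hzE : z ∈ E := hsub z fun i => by
    obtain ⟨j, hj⟩ := hrange i
    have hxq : dist (x i) q ≤ 3 * ξ / 4 := hj ▸ hball j
    linarith [dist_triangle (((f ^ k) ^ i) z) (x i) q, hz i]
  have h := dist_lt_two_mul_of_isFixedPt_of_shadows (hid z hzE) hz (0 : Fin (n + 2)) i₀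
  rw [hxc, hxc, hc0, hi₀] at h
  linarith

/-- Let `f` be a bijection of a metric space fixing `q`, `ξ > 0`, `k ≥ 1`, and let `E` be a
set containing `q` on which `f^k` is the identity, such that every point whose full
`f^k`-orbit stays within distance `ξ` of `q` lies in `E`.  Assume that for every `δ > 0`
there is a closed `δ`-chain for `f^k` through the `3ξ/4`-sphere around `q`, contained in the
closed `3ξ/4`-ball.  Then `f^k` does not have the shadowing property with any `ε < ξ/4`. -/
theorem iterate_not_shadowing {M : Type*} [MetricSpace M]
    (f : Equiv.Perm M) (q : M) (hq : f q = q) (ξ : ℝ) (hξ : 0 < ξ)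
    (k : ℕ) (hk : 1 ≤ k) (E : Set M) (hqE : q ∈ E)
    (hid : ∀ x ∈ E, (f ^ k) x = x)
    (hsub : ∀ z : M, (∀ n : ℤ, dist (((f ^ k) ^ n) z) q < ξ) → z ∈ E)
    (hchain : ∀ δ > (0 : ℝ), ∃ N : ℕ, ∃ c : Fin (N + 1) → M,
      c 0 = q ∧ c (Fin.last N) = q ∧
      (∃ i, dist q (c i) = 3 * ξ / 4) ∧
      (∀ i, c i ∈ Metric.closedBall q (3 * ξ / 4)) ∧
      (∀ i : Fin N, dist ((f ^ k) (c i.castSucc)) (c i.succ) < δ)) :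
    ∀ ε : ℝ, 0 < ε → ε < ξ / 4 →
      ¬ (∃ δ > (0 : ℝ), ∀ x : ℤ → M,
          (∀ i : ℤ, dist ((f ^ k) (x i)) (x (i + 1)) < δ) →
          ∃ z : M, ∀ i : ℤ, dist (((f ^ k) ^ i) z) (x i) < ε) :=
  iterate_not_shadowing_general f q ξ k E hid hsub hchain
end

section
/- For a hyperbolic linear map A on ℝ^n (no eigenvalues on the unit circle), the only bounded full orbit is the zero orbit: if sup_{n∈ℤ} ‖A^n v‖ < ∞ then v = 0. -/
/-!
After complexifying, the vectors with bounded full orbit form an `A`-invariant subspace. Were it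
nonzero, it would contain an eigenvector `u` of `A`, with eigenvalue `μ`; but then
`‖Aᵐ u‖ = ‖μ‖ᵐ ‖u‖` is bounded for all `m ∈ ℤ`, which forces `‖μ‖ = 1`.
-/

open Module

namespace Module.End

theorem HasEigenvector.ne_zero_of_isUnit {R M : Type*} [CommRing R] [AddCommGroup M]
    [Module R M] {f : End R M} {μ : R} {u : M} (hf : IsUnit f) (hu : f.HasEigenvector μ u) :
    μ ≠ 0 := by
  rintro rfl
  refine hu.2 (((Module.End.isUnit_iff f).mp hf).injective ?_)
  rw [hu.apply_eq_smul, zero_smul, map_zero]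

theorem HasEigenvector.units_inv {K V : Type*} [Field K] [AddCommGroup V] [Module K V]
    {f : (End K V)ˣ} {μ : K} {u : V}
    (hu : (f : End K V).HasEigenvector μ u) : (↑f⁻¹ : End K V).HasEigenvector μ⁻¹ u := by
  have hfu := hu.apply_eq_smul
  have hμ : μ ≠ 0 := hu.ne_zero_of_isUnit f.isUnit
  refine hasEigenvector_iff.mpr ⟨mem_eigenspace_iff.mpr ?_, hu.2⟩
  calc (↑f⁻¹ : End K V) u = (↑f⁻¹ : End K V) (μ⁻¹ • (f : End K V) u) := by
        rw [hfu, smul_smul, inv_mul_cancel₀ hμ, one_smul]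
    _ = μ⁻¹ • u := by rw [map_smul, ← Module.End.mul_apply, Units.inv_mul, Module.End.one_apply]

variable {𝕜 E : Type*} [NormedField 𝕜] [NormedAddCommGroup E] [NormedSpace 𝕜 E]

theorem HasEigenvector.norm_le_one_of_bounded_pow_apply {f : End 𝕜 E} {μ : 𝕜} {u : E}
    (hu : f.HasEigenvector μ u) (hbdd : ∃ C : ℝ, ∀ k : ℕ, ‖(f ^ k) u‖ ≤ C) : ‖μ‖ ≤ 1 := by
  obtain ⟨C, hC⟩ := hbdd
  by_contra! hμ
  have hu0 : 0 < ‖u‖ := norm_pos_iff.mpr hu.2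
  obtain ⟨k, hk⟩ := pow_unbounded_of_one_lt (C / ‖u‖) hμ
  have := hC k
  rw [hu.pow_apply, norm_smul, norm_pow] at this
  rw [div_lt_iff₀ hu0] at hk
  linarith

def boundedOrbitSubmodule (f : (End 𝕜 E)ˣ) : Submodule 𝕜 E where
  carrier := {v | ∃ C : ℝ, ∀ m : ℤ, ‖(↑(f ^ m) : End 𝕜 E) v‖ ≤ C}
  add_mem' := by
    rintro x y ⟨C₁, h₁⟩ ⟨C₂, h₂⟩
    refine ⟨C₁ + C₂, fun m => ?_⟩
    rw [map_add]
    exact (norm_add_le _ _).trans (add_le_add (h₁ m) (h₂ m))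
  zero_mem' := ⟨0, fun m => by simp⟩
  smul_mem' := by
    rintro c x ⟨C, h⟩
    refine ⟨‖c‖ * C, fun m => ?_⟩
    rw [map_smul, norm_smul]
    exact mul_le_mul_of_nonneg_left (h m) (norm_nonneg c)

variable {f : (End 𝕜 E)ˣ}

theorem apply_mem_boundedOrbitSubmodule {v : E} (hv : v ∈ boundedOrbitSubmodule f) :
    (f : End 𝕜 E) v ∈ boundedOrbitSubmodule f := by
  obtain ⟨C, hC⟩ := hv
  refine ⟨C, fun m => ?_⟩
  rw [← Module.End.mul_apply, ← Units.val_mul, ← zpow_add_one]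
  exact hC (m + 1)

theorem HasEigenvector.norm_eq_one_of_mem_boundedOrbitSubmodule {μ : 𝕜} {u : E}
    (hu : (f : End 𝕜 E).HasEigenvector μ u) (hbdd : u ∈ boundedOrbitSubmodule f) :
    ‖μ‖ = 1 := by
  obtain ⟨C, hC⟩ := hbdd
  have hμ : ‖μ‖ ≤ 1 := hu.norm_le_one_of_bounded_pow_apply
    ⟨C, fun k => by simpa only [zpow_natCast, Units.val_pow_eq_pow_val] using hC k⟩
  have hμinv : ‖μ⁻¹‖ ≤ 1 := by
    refine hu.units_inv.norm_le_one_of_bounded_pow_apply ⟨C, fun k => ?_⟩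
    simpa only [zpow_neg, zpow_natCast, ← inv_pow, Units.val_pow_eq_pow_val] using hC (-k)
  rw [norm_inv, inv_le_one₀ (norm_pos_iff.mpr (hu.ne_zero_of_isUnit f.isUnit))] at hμinv
  exact le_antisymm hμ hμinv

theorem boundedOrbitSubmodule_eq_bot [IsAlgClosed 𝕜] [FiniteDimensional 𝕜 E]
    (hf : ∀ μ, (f : End 𝕜 E).HasEigenvalue μ → ‖μ‖ ≠ 1) : boundedOrbitSubmodule f = ⊥ := by
  by_contra hne
  have := Submodule.nontrivial_iff_ne_bot.mpr hne
  obtain ⟨μ, hμ⟩ :=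
    exists_eigenvalue ((f : End 𝕜 E).restrict fun _ => apply_mem_boundedOrbitSubmodule)
  obtain ⟨⟨u, hu_mem⟩, hu⟩ := hμ.exists_hasEigenvector
  have hfu : (f : End 𝕜 E).HasEigenvector μ u := by
    refine hasEigenvector_iff.mpr ⟨mem_eigenspace_iff.mpr ?_, fun h => hu.2 (Subtype.ext h)⟩
    exact congrArg Subtype.val hu.apply_eq_smul
  exact hf μ (hasEigenvalue_of_hasEigenvector hfu)
    (hfu.norm_eq_one_of_mem_boundedOrbitSubmodule hu_mem)

end Module.End

namespace Matrix

theorem norm_map_ofReal_mulVec_le {ι : Type*} [Fintype ι] [DecidableEq ι]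
    (M : Matrix ι ι ℝ) (x : EuclideanSpace ℝ ι) :
    ‖M.map (algebraMap ℝ ℂ) *ᵥ (fun i => (x i : ℂ))‖ ≤ ‖M.toEuclideanLin x‖ := by
  refine pi_norm_le_iff_of_nonneg (norm_nonneg _) |>.mpr fun i => ?_
  change ‖(M.map (algebraMap ℝ ℂ) *ᵥ (algebraMap ℝ ℂ ∘ x.ofLp)) i‖ ≤ _
  rw [← RingHom.map_mulVec, Complex.coe_algebraMap, Complex.norm_real]
  exact PiLp.norm_apply_le (M.toEuclideanLin x) i

end Matrix

/-- For a hyperbolic invertible linear map `A` on `ℝ^n` (no complex eigenvalue of modulus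
one), the only bounded full orbit is the zero orbit: if `sup_{m ∈ ℤ} ‖A^m v‖ < ∞` then
`v = 0`. -/
theorem hyperbolic_bounded_orbit_zero (n : ℕ)
    (A : Matrix (Fin n) (Fin n) ℝ) (hA : IsUnit A)
    (hspec : ∀ μ ∈ spectrum ℂ (A.map (algebraMap ℝ ℂ)), ‖μ‖ ≠ 1)
    (v : EuclideanSpace ℝ (Fin n))
    (hbdd : ∃ C : ℝ, ∀ m : ℤ, ‖Matrix.toEuclideanLin (A ^ m) v‖ ≤ C) :
    v = 0 := by
  let φ : Matrix (Fin n) (Fin n) ℝ →* Module.End ℂ (Fin n → ℂ) :=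
    (Matrix.toLinAlgEquiv'.toRingHom.comp (algebraMap ℝ ℂ).mapMatrix).toMonoidHom
  let f := Units.map φ hA.unit
  have hf_zpow (m : ℤ) : (↑(f ^ m) : Module.End ℂ (Fin n → ℂ)) =
      Matrix.toLin' ((A ^ m).map (algebraMap ℝ ℂ)) := by
    rw [← map_zpow, Units.coe_map, Matrix.coe_units_zpow, IsUnit.unit_spec]
    rfl
  have hf_spec (μ : ℂ) (hμ : (f : Module.End ℂ (Fin n → ℂ)).HasEigenvalue μ) : ‖μ‖ ≠ 1 := by
    refine hspec μ ?_
    simpa [f, φ] using hμ.mem_spectrum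
  obtain ⟨C, hC⟩ := hbdd
  have hv : (fun i => (v i : ℂ)) ∈ Module.End.boundedOrbitSubmodule f := ⟨C, fun m => by
    rw [hf_zpow, Matrix.toLin'_apply]
    exact (Matrix.norm_map_ofReal_mulVec_le _ _).trans (hC m)⟩
  rw [Module.End.boundedOrbitSubmodule_eq_bot hf_spec, Submodule.mem_bot] at hv
  ext i
  simpa using congrFun hv i
end

section
/- Let A be an invertible linear map on ℝ^n with invariant splitting ℝ^n = E^s ⊕ E^u and λ ∈ (0,1) such that ‖A^n|_{E^s}‖ ≤ λ^n and ‖A^{-n}|_{E^u}‖ ≤ λ^n for n ≥ 0. Then A has the shadowing property on ℝ^n. -/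
/-! Put `e i = A x_i - x_{i+1}` and look for a bounded solution `w` of `w_{i+1} = A w_i + e_i`;
then `z = x_0 + w_0` satisfies `A^i z = x_i + w_i`. Splitting `e` along `E^s ⊕ E^u` with a
projection `P`, the stable part is summed forward, `∑ₖ A^k P e_{i-1-k}`, and the unstable part
backward, `-∑ₖ A^{-(k+1)} (1 - P) e_{i+k}`. Both series converge geometrically, which gives
`‖w_i‖ ≤ (‖P‖ + ‖1 - P‖) δ / (1 - λ)`. -/

theorem zpow_smul_eq_of_forall_succ {G α : Type*} [Group G] [MulAction G α] (g : G) {z : ℤ → α}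
    (hz : ∀ i, z (i + 1) = g • z i) (i : ℤ) : g ^ i • z 0 = z i := by
  induction i using Int.induction_on with
  | zero => rw [zpow_zero, one_smul]
  | succ k ih => rw [hz, ← ih, ← mul_smul, ← zpow_one_add, add_comm]
  | pred k ih =>
    have hpred : z (-k) = g • z (-k - 1) := by rw [← hz, sub_add_cancel]
    rw [eq_inv_smul_iff.mpr hpred.symm, ← ih, ← mul_smul, ← zpow_neg_one, ← zpow_add,
      neg_add_eq_sub]

section

variable {E : Type*} [NormedAddCommGroup E] [CompleteSpace E] {lam c : ℝ}

theorem summable_of_norm_le_geometric {f : ℕ → E} (h0 : 0 ≤ lam) (h1 : lam < 1)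
    (hf : ∀ k, ‖f k‖ ≤ lam ^ k * c) : Summable f :=
  .of_norm_bounded ((summable_geometric_of_lt_one h0 h1).mul_right c) hf

omit [CompleteSpace E] in
theorem norm_tsum_le_of_norm_le_geometric {f : ℕ → E} (h0 : 0 ≤ lam) (h1 : lam < 1)
    (hf : ∀ k, ‖f k‖ ≤ lam ^ k * c) : ‖∑' k, f k‖ ≤ (1 - lam)⁻¹ * c :=
  tsum_of_norm_bounded ((hasSum_geometric_of_lt_one h0 h1).mul_right c) hf

variable [NormedSpace ℝ E]

noncomputable def stableSum (T : E →L[ℝ] E) (e : ℤ → E) (i : ℤ) : E :=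
  ∑' k : ℕ, (T ^ k) (e (i - 1 - k))

noncomputable def unstableSum (S : E →L[ℝ] E) (e : ℤ → E) (i : ℤ) : E :=
  -∑' k : ℕ, (S ^ (k + 1)) (e (i + k))

variable {T S : E →L[ℝ] E} {e : ℤ → E}

theorem stableSum_succ (h0 : 0 ≤ lam) (h1 : lam < 1) (hT : ∀ k i, ‖(T ^ k) (e i)‖ ≤ lam ^ k * c)
    (i : ℤ) : stableSum T e (i + 1) = T (stableSum T e i) + e i := by
  have hsum : Summable fun k : ℕ => (T ^ k) (e (i - k)) :=
    summable_of_norm_le_geometric h0 h1 fun k => hT k _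
  calc stableSum T e (i + 1) = ∑' k : ℕ, (T ^ k) (e (i - k)) := by
        simp only [stableSum, add_sub_cancel_right]
    _ = e i + ∑' k : ℕ, T ((T ^ k) (e (i - 1 - k))) := by
        rw [hsum.tsum_eq_zero_add]
        congr 1
        · simp
        · refine tsum_congr fun k => ?_
          rw [← mul_apply_eq_comp, ← pow_succ']
          congr 2
          push_cast
          ring
    _ = T (stableSum T e i) + e i := by
        rw [stableSum, T.map_tsum (summable_of_norm_le_geometric h0 h1 fun k => hT k _),
          add_comm]

omit [CompleteSpace E] in
theorem norm_stableSum_le (h0 : 0 ≤ lam) (h1 : lam < 1)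
    (hT : ∀ k i, ‖(T ^ k) (e i)‖ ≤ lam ^ k * c) (i : ℤ) : ‖stableSum T e i‖ ≤ (1 - lam)⁻¹ * c :=
  norm_tsum_le_of_norm_le_geometric h0 h1 fun k => hT k _

theorem unstableSum_succ (hTS : T * S = 1) (h0 : 0 ≤ lam) (h1 : lam < 1)
    (hS : ∀ k i, ‖(S ^ k) (e i)‖ ≤ lam ^ k * c) (i : ℤ) :
    unstableSum S e (i + 1) = T (unstableSum S e i) + e i := by
  have hsum : Summable fun k : ℕ => (S ^ k) (e (i + k)) :=
    summable_of_norm_le_geometric h0 h1 fun k => hS k _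
  have hsum_succ : Summable fun k : ℕ => (S ^ (k + 1)) (e (i + k)) :=
    summable_of_norm_le_geometric (c := lam * c) h0 h1 fun k => (hS (k + 1) _).trans_eq (by ring)
  calc unstableSum S e (i + 1) = -∑' k : ℕ, (S ^ (k + 1)) (e (i + (k + 1 : ℕ))) := by
        simp only [unstableSum]
        push_cast
        ring_nf
    _ = -(∑' k : ℕ, (S ^ k) (e (i + k))) + e i := by
        rw [hsum.tsum_eq_zero_add]
        simp
    _ = T (unstableSum S e i) + e i := by
        rw [unstableSum, map_neg, T.map_tsum hsum_succ]
        congr 2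
        refine tsum_congr fun k => ?_
        rw [← mul_apply_eq_comp, pow_succ', ← mul_assoc, hTS, one_mul]

omit [CompleteSpace E] in
theorem norm_unstableSum_le (h0 : 0 ≤ lam) (h1 : lam < 1)
    (hS : ∀ k i, ‖(S ^ k) (e i)‖ ≤ lam ^ k * c) (i : ℤ) :
    ‖unstableSum S e i‖ ≤ (1 - lam)⁻¹ * c := by
  have hc : 0 ≤ c := by simpa using (norm_nonneg _).trans (hS 0 0)
  rw [unstableSum, norm_neg]
  refine norm_tsum_le_of_norm_le_geometric h0 h1 fun k => (hS (k + 1) _).trans ?_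
  calc lam ^ (k + 1) * c = lam ^ k * (lam * c) := by ring
    _ ≤ lam ^ k * c := by gcongr; exact mul_le_of_le_one_left hc h1.le

theorem exists_bounded_solution_of_hyperbolic (T : (E →L[ℝ] E)ˣ) (P : E →L[ℝ] E) (h0 : 0 ≤ lam)
    (h1 : lam < 1) (hs : ∀ (m : ℕ) v, ‖((T : E →L[ℝ] E) ^ m) (P v)‖ ≤ lam ^ m * ‖P v‖)
    (hu : ∀ (m : ℕ) v, ‖((↑T⁻¹ : E →L[ℝ] E) ^ m) (v - P v)‖ ≤ lam ^ m * ‖v - P v‖)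
    {e : ℤ → E} {δ : ℝ} (he : ∀ i, ‖e i‖ ≤ δ) :
    ∃ w : ℤ → E, (∀ i, w (i + 1) = T • w i + e i) ∧
      ∀ i, ‖w i‖ ≤ (1 - lam)⁻¹ * ((‖P‖ + ‖1 - P‖) * δ) := by
  have hes : ∀ k i, ‖((T : E →L[ℝ] E) ^ k) (P (e i))‖ ≤ lam ^ k * (‖P‖ * δ) := fun k i =>
    (hs k _).trans (by gcongr; exact P.le_opNorm_of_le (he i))
  have heu : ∀ k i, ‖((↑T⁻¹ : E →L[ℝ] E) ^ k) (e i - P (e i))‖ ≤ lam ^ k * (‖1 - P‖ * δ) :=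
    fun k i => (hu k _).trans (by gcongr; exact (1 - P).le_opNorm_of_le (he i))
  refine ⟨fun i => stableSum T (fun i => P (e i)) i + unstableSum ↑T⁻¹ (fun i => e i - P (e i)) i,
    fun i => ?_, fun i => ?_⟩
  · simp only [stableSum_succ h0 h1 hes, unstableSum_succ T.mul_inv h0 h1 heu, Units.smul_def,
      ContinuousLinearMap.smul_def, map_add]
    abel
  · calc _ ≤ (1 - lam)⁻¹ * (‖P‖ * δ) + (1 - lam)⁻¹ * (‖1 - P‖ * δ) :=
          (norm_add_le _ _).trans
            (add_le_add (norm_stableSum_le h0 h1 hes i) (norm_unstableSum_le h0 h1 heu i))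
      _ = (1 - lam)⁻¹ * ((‖P‖ + ‖1 - P‖) * δ) := by ring

theorem exists_shadowing_point_of_hyperbolic (T : (E →L[ℝ] E)ˣ) (P : E →L[ℝ] E) (h0 : 0 ≤ lam)
    (h1 : lam < 1) (hs : ∀ (m : ℕ) v, ‖((T : E →L[ℝ] E) ^ m) (P v)‖ ≤ lam ^ m * ‖P v‖)
    (hu : ∀ (m : ℕ) v, ‖((↑T⁻¹ : E →L[ℝ] E) ^ m) (v - P v)‖ ≤ lam ^ m * ‖v - P v‖)
    {x : ℤ → E} {δ : ℝ} (hx : ∀ i, ‖T • x i - x (i + 1)‖ ≤ δ) :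
    ∃ z, ∀ i : ℤ, ‖(T ^ i) • z - x i‖ ≤ (1 - lam)⁻¹ * ((‖P‖ + ‖1 - P‖) * δ) := by
  obtain ⟨w, hw, hw_le⟩ := exists_bounded_solution_of_hyperbolic T P h0 h1 hs hu hx
  have horbit : ∀ i, (T ^ i) • (x 0 + w 0) = x i + w i :=
    zpow_smul_eq_of_forall_succ T (z := fun i => x i + w i) fun i => by
      rw [hw, smul_add]
      abel
  exact ⟨x 0 + w 0, fun i => by rw [horbit, add_sub_cancel_left]; exact hw_le i⟩

end

theorem Matrix.exists_units_toEuclideanCLM {𝕜 ι : Type*} [RCLike 𝕜] [Fintype ι] [DecidableEq ι]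
    {A : Matrix ι ι 𝕜} (hA : IsUnit A) :
    ∃ T : (EuclideanSpace 𝕜 ι →L[𝕜] EuclideanSpace 𝕜 ι)ˣ,
      (∀ (i : ℤ) v, (T ^ i) • v = toEuclideanLin (A ^ i) v) ∧
      (∀ (m : ℕ) v, ((T : _ →L[𝕜] _) ^ m) v = toEuclideanLin (A ^ m) v) ∧
      ∀ (m : ℕ) v, ((↑T⁻¹ : _ →L[𝕜] _) ^ m) v = toEuclideanLin (A⁻¹ ^ m) v := by
  refine ⟨Units.map (toEuclideanCLM : Matrix ι ι 𝕜 ≃⋆ₐ[𝕜] _).toMonoidHom hA.unit,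
    fun i v => ?_, fun m v => ?_, fun m v => ?_⟩
  · rw [← map_zpow, Units.smul_def, Units.coe_map, coe_units_zpow, IsUnit.unit_spec]
    rfl
  · rw [Units.coe_map, IsUnit.unit_spec, ← map_pow]
    rfl
  · rw [← map_inv, Units.coe_map, coe_units_inv, IsUnit.unit_spec, ← map_pow]
    rfl

theorem hyperbolic_linear_shadowing_general (n : ℕ)
    (A : Matrix (Fin n) (Fin n) ℝ) (hA : IsUnit A)
    (Es Eu : Submodule ℝ (EuclideanSpace ℝ (Fin n)))
    (hcompl : IsCompl Es Eu)
    (lam : ℝ) (hlam0 : 0 < lam) (hlam1 : lam < 1)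
    (hs : ∀ m : ℕ, ∀ v ∈ Es, ‖Matrix.toEuclideanLin (A ^ m) v‖ ≤ lam ^ m * ‖v‖)
    (hu : ∀ m : ℕ, ∀ v ∈ Eu, ‖Matrix.toEuclideanLin (A⁻¹ ^ m) v‖ ≤ lam ^ m * ‖v‖) :
    ∀ ε > (0 : ℝ), ∃ δ > (0 : ℝ), ∀ x : ℤ → EuclideanSpace ℝ (Fin n),
      (∀ i : ℤ, ‖Matrix.toEuclideanLin A (x i) - x (i + 1)‖ < δ) →
      ∃ z : EuclideanSpace ℝ (Fin n),
        ∀ i : ℤ, ‖Matrix.toEuclideanLin (A ^ i) z - x i‖ < ε := by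
  intro ε hε
  obtain ⟨T, hT_zpow, hT_pow, hT_inv_pow⟩ := Matrix.exists_units_toEuclideanCLM hA
  let P := LinearMap.toContinuousLinearMap (Es.projection Eu hcompl)
  obtain ⟨δ, hδ, hδε⟩ := exists_pos_mul_lt hε ((1 - lam)⁻¹ * (‖P‖ + ‖1 - P‖))
  refine ⟨δ, hδ, fun x hx => ?_⟩
  obtain ⟨z, hz⟩ := exists_shadowing_point_of_hyperbolic T P hlam0.le hlam1
    (fun m v => hT_pow m _ ▸ hs m _ (Submodule.projection_apply_mem hcompl v))
    (fun m v => hT_inv_pow m _ ▸ hu m _ (Submodule.sub_projection_mem hcompl v))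
    (δ := δ) (fun i => by rw [← zpow_one T, hT_zpow, zpow_one]; exact (hx i).le)
  refine ⟨z, fun i => ?_⟩
  rw [← hT_zpow]
  exact (hz i).trans_lt (by rwa [← mul_assoc])

/-- An invertible linear map `A` of `ℝ^n` with an invariant hyperbolic splitting
`ℝ^n = E^s ⊕ E^u`, contracting on `E^s` and expanding on `E^u` at uniform rate
`λ ∈ (0,1)`, has the shadowing property on `ℝ^n`. -/
theorem hyperbolic_linear_shadowing (n : ℕ)
    (A : Matrix (Fin n) (Fin n) ℝ) (hA : IsUnit A)
    (Es Eu : Submodule ℝ (EuclideanSpace ℝ (Fin n)))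
    (hcompl : IsCompl Es Eu)
    (hinvs : ∀ v ∈ Es, Matrix.toEuclideanLin A v ∈ Es)
    (hinvu : ∀ v ∈ Eu, Matrix.toEuclideanLin A v ∈ Eu)
    (lam : ℝ) (hlam0 : 0 < lam) (hlam1 : lam < 1)
    (hs : ∀ m : ℕ, ∀ v ∈ Es, ‖Matrix.toEuclideanLin (A ^ m) v‖ ≤ lam ^ m * ‖v‖)
    (hu : ∀ m : ℕ, ∀ v ∈ Eu, ‖Matrix.toEuclideanLin (A⁻¹ ^ m) v‖ ≤ lam ^ m * ‖v‖) :
    ∀ ε > (0 : ℝ), ∃ δ > (0 : ℝ), ∀ x : ℤ → EuclideanSpace ℝ (Fin n),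
      (∀ i : ℤ, ‖Matrix.toEuclideanLin A (x i) - x (i + 1)‖ < δ) →
      ∃ z : EuclideanSpace ℝ (Fin n),
        ∀ i : ℤ, ‖Matrix.toEuclideanLin (A ^ i) z - x i‖ < ε :=
  hyperbolic_linear_shadowing_general n A hA Es Eu hcompl lam hlam0 hlam1 hs hu
end
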